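/- Let φ, φ̃ : 𝔻 → 𝔻 be holomorphic with φ(z) = λ z^p ψ(z) and φ̃(z) = μ z^q ψ̃(z), where p, q ≥ 2, q is not a multiple of p, λ, μ ≠ 0, and ψ(0), ψ̃(0) ≠ 0. Then the composition operator C_{φ̃} on H²(𝔻) does not belong to the weak-operator-topology closure of the polynomial algebra generated by C_φ. -/

import Mathlib

open Complex Metric Polynomial

/-- The Hardy space `H²(𝔻)` realized as `ℓ²` of Taylor coefficients. -/
noncomputable abbrev HardyDisc := lp (fun _ : ℕ => ℂ) 2

/-- Evaluation of the power series with coefficient sequence `x` at `z ∈ 𝔻`. -/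
noncomputable def discEval (x : HardyDisc) (z : ℂ) : ℂ := ∑' m : ℕ, x m * z ^ m

open Filter Topology

/-! Test every operator against `e₁ = z` and read off Taylor coefficients. Since `φ` vanishes to
order exactly `p` at `0`, `C_φ^d z = φ^{[d]}` vanishes to order exactly `p^d`; so the coefficient
vectors of the `C_φ^d z` at the positions `1, p, …, p^J` (all `pⁱ ≤ q`) are triangular, and some
functional `ℓ = ⟨·, z^q⟩ - Σ cᵢ ⟨·, z^{pⁱ}⟩` kills every `C_φ^d z`. Then `B ↦ ℓ (B z)` is
WOT-continuous and vanishes on the WOT-closure of the polynomials in `C_φ`. But `C_{φ̃} z = φ̃`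
vanishes to order exactly `q`, which is not a power of `p`, so `ℓ (C_{φ̃} z)` is its nonzero
`q`-th coefficient. -/

section VanishingOrder

variable {𝕜 : Type*} [NontriviallyNormedField 𝕜]

/-- Unlike `analyticOrderAt f 0 = k`, this only asks the cofactor to be continuous at `0`. -/
def VanishesToOrder (f : 𝕜 → 𝕜) (k : ℕ) : Prop :=
  ∃ g : 𝕜 → 𝕜, ContinuousAt g 0 ∧ g 0 ≠ 0 ∧ f =ᶠ[𝓝 0] fun z => z ^ k * g z

lemma vanishesToOrder_of_forall_mem_ball {f g : 𝕜 → 𝕜} {c : 𝕜} {k : ℕ} {r : ℝ} (hr : 0 < r)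
    (hc : c ≠ 0) (hg : ContinuousAt g 0) (hg0 : g 0 ≠ 0)
    (hf : ∀ z ∈ ball 0 r, f z = c * z ^ k * g z) : VanishesToOrder f k :=
  ⟨fun z => c * g z, continuousAt_const.mul hg, mul_ne_zero hc hg0,
    eventually_of_mem (ball_mem_nhds 0 hr) fun z hz => by rw [hf z hz]; ring⟩

lemma VanishesToOrder.congr {f f' : 𝕜 → 𝕜} {k : ℕ} (hf : VanishesToOrder f k)
    (hff' : f =ᶠ[𝓝 0] f') : VanishesToOrder f' k :=
  let ⟨g, hgc, hg0, hfg⟩ := hf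
  ⟨g, hgc, hg0, hff'.symm.trans hfg⟩

lemma VanishesToOrder.comp {f φ : 𝕜 → 𝕜} {k p : ℕ} (hf : VanishesToOrder f k)
    (hφ : VanishesToOrder φ p) (hp : p ≠ 0) : VanishesToOrder (f ∘ φ) (k * p) := by
  obtain ⟨g, hgc, hg0, hfg⟩ := hf
  obtain ⟨h, hhc, hh0, hφh⟩ := hφ
  have hφ0 : φ 0 = 0 := by simpa [hp] using hφh.eq_of_nhds
  have hφc : ContinuousAt φ 0 := ((continuousAt_id.pow p).mul hhc).congr hφh.symm
  have hφt : Tendsto φ (𝓝 0) (𝓝 0) := by simpa [hφ0] using hφc.tendsto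
  refine ⟨fun z => h z ^ k * g (φ z), (hhc.pow k).mul (hgc.comp_of_eq hφc hφ0),
    by simp [hφ0, hh0, hg0], ?_⟩
  filter_upwards [hφt.eventually hfg, hφh] with z hfz hφz
  rw [Function.comp_apply, hfz, hφz]
  ring

end VanishingOrder

section PowerSeries

variable {𝕜 : Type*} [NontriviallyNormedField 𝕜] [CompleteSpace 𝕜] {a : ℕ → 𝕜} {M : ℝ}

lemma summable_mul_pow_of_norm_le (ha : ∀ m, ‖a m‖ ≤ M) {z : 𝕜} (hz : ‖z‖ < 1) :
    Summable fun m => a m * z ^ m :=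
  .of_norm_bounded ((summable_geometric_of_lt_one (norm_nonneg z) hz).mul_left M) fun m => by
    rw [norm_mul, norm_pow]
    exact mul_le_mul_of_nonneg_right (ha m) (by positivity)

lemma tendsto_tsum_mul_pow_nhds_zero (ha : ∀ m, ‖a m‖ ≤ M) :
    Tendsto (fun z => ∑' m, a m * z ^ m) (𝓝 0) (𝓝 (a 0)) := by
  have hM : 0 ≤ M := (norm_nonneg _).trans (ha 0)
  have hcont : ContinuousOn (fun z : 𝕜 => ∑' m, a m * z ^ m) (closedBall 0 (1 / 2)) :=
    continuousOn_tsum (fun m => (continuous_const.mul (continuous_pow m)).continuousOn)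
      (summable_geometric_two.mul_left M) fun m z hz => by
        rw [norm_mul, norm_pow]
        exact mul_le_mul (ha m) (pow_le_pow_left₀ (norm_nonneg z) (by simpa using hz) m)
          (by positivity) hM
  have hval : ∑' m, a m * (0 : 𝕜) ^ m = a 0 := by
    rw [tsum_eq_single 0 fun m hm => by simp [hm]]
    simp
  simpa [hval] using (hcont.continuousAt (closedBall_mem_nhds 0 (by norm_num))).tendsto

lemma tsum_mul_pow_eq_add_mul_tsum_succ (ha : ∀ m, ‖a m‖ ≤ M) {z : 𝕜} (hz : ‖z‖ < 1) :
    ∑' m, a m * z ^ m = a 0 + z * ∑' m, a (m + 1) * z ^ m := by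
  rw [(summable_mul_pow_of_norm_le ha hz).tsum_eq_zero_add, ← tsum_mul_left]
  simp only [pow_zero, mul_one, pow_succ']
  congr 1
  exact tsum_congr fun m => by ring

lemma apply_zero_eq_of_eventuallyEq_pow_mul (ha : ∀ m, ‖a m‖ ≤ M) {g : 𝕜 → 𝕜}
    (hg : ContinuousAt g 0) {k : ℕ} (h : ∀ᶠ z in 𝓝[≠] 0, ∑' m, a m * z ^ m = z ^ k * g z) :
    a 0 = 0 ^ k * g 0 :=
  tendsto_nhds_unique ((tendsto_tsum_mul_pow_nhds_zero ha).mono_left nhdsWithin_le_nhds |>.congr' h)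
    (((continuousAt_id.pow k).mul hg).tendsto.mono_left nhdsWithin_le_nhds)

theorem coeff_eq_of_eventuallyEq_pow_mul (ha : ∀ m, ‖a m‖ ≤ M) {g : 𝕜 → 𝕜}
    (hg : ContinuousAt g 0) (k : ℕ) (h : ∀ᶠ z in 𝓝[≠] 0, ∑' m, a m * z ^ m = z ^ k * g z) :
    (∀ m < k, a m = 0) ∧ a k = g 0 := by
  induction k generalizing a with
  | zero =>
    exact ⟨fun m hm => absurd hm m.not_lt_zero,
      by simpa using apply_zero_eq_of_eventuallyEq_pow_mul ha hg h⟩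
  | succ k ih =>
    have ha0 : a 0 = 0 := by simpa using apply_zero_eq_of_eventuallyEq_pow_mul ha hg h
    have hshift : ∀ᶠ z in 𝓝[≠] 0, ∑' m, a (m + 1) * z ^ m = z ^ k * g z := by
      filter_upwards [h, self_mem_nhdsWithin, nhdsWithin_le_nhds (ball_mem_nhds 0 one_pos)]
        with z hz hz0 hz1
      rw [tsum_mul_pow_eq_add_mul_tsum_succ ha (by simpa using hz1), ha0, zero_add, pow_succ',
        mul_assoc] at hz
      exact mul_left_cancel₀ hz0 hz
    obtain ⟨hlt, hk⟩ := ih (fun m => ha (m + 1)) hshift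
    refine ⟨fun m hm => ?_, hk⟩
    cases m with
    | zero => exact ha0
    | succ m => exact hlt m (by omega)

end PowerSeries

lemma exists_forall_eq_sum_of_triangular {𝕜 : Type*} [Field 𝕜] {u : ℕ → ℕ → 𝕜} {n : ℕ → ℕ}
    (hn : StrictMono n) (hzero : ∀ d, ∀ m < n d, u d m = 0) (hlead : ∀ d, u d (n d) ≠ 0)
    (q : ℕ) : ∃ (J : ℕ) (c : Fin J → 𝕜), (∀ i : Fin J, n i ≤ q) ∧
      ∀ d, u d q = ∑ i, c i * u d (n i) := by
  have hex : ∃ J, q < n J := ⟨q + 1, (Nat.lt_succ_self q).trans_le (hn.id_le _)⟩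
  set J := Nat.find hex
  have hle : ∀ i < J, n i ≤ q := fun i hi => not_lt.1 (Nat.find_min hex hi)
  have hgt : ∀ d, J ≤ d → q < n d := fun d hd => (Nat.find_spec hex).trans_le (hn.monotone hd)
  let A : Matrix (Fin J) (Fin J) 𝕜 := fun i d => u d (n i)
  have hA : A.IsLowerTriangular := fun i d hid => hzero d (n i) (hn hid)
  have hdet : A.det ≠ 0 := by
    rw [Matrix.det_of_isLowerTriangular A hA]
    exact Finset.prod_ne_zero_iff.2 fun i _ => hlead i
  obtain ⟨c, hc⟩ := Matrix.vecMul_surjective_iff_isUnit.2 ((A.isUnit_iff_isUnit_det).2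
    hdet.isUnit) fun d => u d q
  refine ⟨J, c, fun i => hle i i.2, fun d => ?_⟩
  by_cases hd : d < J
  · exact (congrFun hc ⟨d, hd⟩).symm
  · rw [hzero d q (hgt d (not_lt.1 hd))]
    exact (Finset.sum_eq_zero fun i _ => by
      rw [hzero d _ ((hle i i.2).trans_lt (hgt d (not_lt.1 hd))), mul_zero]).symm

open ContinuousLinearMapWOT in
theorem ofCLM_notMem_closure_image_aeval {𝕜 E : Type*} [NormedField 𝕜] [AddCommGroup E]
    [TopologicalSpace E] [Module 𝕜 E] [IsTopologicalAddGroup E] [ContinuousConstSMul 𝕜 E]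
    {A T : E →L[𝕜] E} (x : E) (ℓ : E →L[𝕜] 𝕜) (hA : ∀ d, ℓ ((A ^ d) x) = 0) (hT : ℓ (T x) ≠ 0) :
    ofCLM (σ := RingHom.id 𝕜) T ∉
      closure (ofCLM '' {B : E →L[𝕜] E | ∃ P : 𝕜[X], B = aeval A P}) := by
  refine fun hmem => hT (closure_minimal ?_
    (isClosed_eq (continuous_dual_apply x ℓ) continuous_const) hmem)
  rintro _ ⟨_, ⟨P, rfl⟩, rfl⟩
  rw [Set.mem_ofPred_eq, ofCLM_apply, aeval_eq_sum_range, _root_.sum_apply, map_sum]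
  exact Finset.sum_eq_zero fun d _ => by rw [_root_.smul_apply, map_smul, hA, smul_zero]

section Hardy

@[simp]
lemma lp.evalCLM_apply {α 𝕜 : Type*} {E : α → Type*} [NormedRing 𝕜]
    [∀ i, NormedAddCommGroup (E i)] [∀ i, Module 𝕜 (E i)] [∀ i, IsBoundedSMul 𝕜 (E i)]
    {p : ENNReal} [Fact (1 ≤ p)] (i : α) (f : lp E p) : lp.evalCLM 𝕜 E p i f = f i :=
  rfl

lemma discEval_single (n : ℕ) (z : ℂ) : discEval (lp.single 2 n 1) z = z ^ n := by
  rw [discEval, tsum_eq_single n fun m hm => by rw [lp.single_apply_ne 2 n _ hm, zero_mul],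
    lp.single_apply_self, one_mul]

lemma vanishesToOrder_discEval_single (n : ℕ) : VanishesToOrder (discEval (lp.single 2 n 1)) n :=
  ⟨fun _ => 1, continuousAt_const, one_ne_zero,
    Eventually.of_forall fun z => by simp [discEval_single]⟩

theorem VanishesToOrder.apply_discEval {x : HardyDisc} {k : ℕ}
    (hx : VanishesToOrder (discEval x) k) : (∀ m < k, x m = 0) ∧ x k ≠ 0 := by
  obtain ⟨g, hgc, hg0, hxg⟩ := hx
  obtain ⟨hlt, hk⟩ := coeff_eq_of_eventuallyEq_pow_mul
    (fun m => lp.norm_apply_le_norm two_ne_zero x m) hgc k (hxg.filter_mono nhdsWithin_le_nhds)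
  exact ⟨hlt, hk ▸ hg0⟩

variable {C : HardyDisc →L[ℂ] HardyDisc} {φ : ℂ → ℂ} {p k : ℕ} {x : HardyDisc}

lemma VanishesToOrder.discEval_apply (hx : VanishesToOrder (discEval x) k)
    (hC : ∀ x : HardyDisc, ∀ z ∈ ball (0 : ℂ) 1, discEval (C x) z = discEval x (φ z))
    (hφ : VanishesToOrder φ p) (hp : p ≠ 0) : VanishesToOrder (discEval (C x)) (k * p) :=
  (hx.comp hφ hp).congr <| eventually_of_mem (ball_mem_nhds 0 one_pos) fun z hz =>
    (hC x z hz).symm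

lemma VanishesToOrder.discEval_pow_apply (hx : VanishesToOrder (discEval x) k)
    (hC : ∀ x : HardyDisc, ∀ z ∈ ball (0 : ℂ) 1, discEval (C x) z = discEval x (φ z))
    (hφ : VanishesToOrder φ p) (hp : p ≠ 0) (d : ℕ) :
    VanishesToOrder (discEval ((C ^ d) x)) (k * p ^ d) := by
  induction d with
  | zero => simpa using hx
  | succ d ih =>
    rw [pow_succ' C, pow_succ p, ← mul_assoc]
    exact ih.discEval_apply hC hφ hp

end Hardy

theorem composition_not_in_wot_closure_disc_general
    (φ φt ψ ψt : ℂ → ℂ) (p q : ℕ) (hp : 2 ≤ p) (hq : 2 ≤ q) (hpq : ¬ p ∣ q)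
    (lam mu : ℂ) (hlam : lam ≠ 0) (hmu : mu ≠ 0)
    (hψhol : DifferentiableOn ℂ ψ (ball (0 : ℂ) 1))
    (hψthol : DifferentiableOn ℂ ψt (ball (0 : ℂ) 1))
    (hform : ∀ z ∈ ball (0 : ℂ) 1, φ z = lam * z ^ p * ψ z)
    (hformt : ∀ z ∈ ball (0 : ℂ) 1, φt z = mu * z ^ q * ψt z)
    (hψ0 : ψ 0 ≠ 0) (hψt0 : ψt 0 ≠ 0)
    (Cφ Cφt : HardyDisc →L[ℂ] HardyDisc)
    (hCφ : ∀ x : HardyDisc, ∀ z ∈ ball (0 : ℂ) 1, discEval (Cφ x) z = discEval x (φ z))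
    (hCφt : ∀ x : HardyDisc, ∀ z ∈ ball (0 : ℂ) 1, discEval (Cφt x) z = discEval x (φt z)) :
    ContinuousLinearMapWOT.ofCLM (σ := RingHom.id ℂ) (E := HardyDisc) (F := HardyDisc) Cφt ∉
      closure ((ContinuousLinearMapWOT.ofCLM (σ := RingHom.id ℂ) (E := HardyDisc) (F := HardyDisc)) ''
        {A : HardyDisc →L[ℂ] HardyDisc | ∃ P : Polynomial ℂ, A = aeval Cφ P}) := by
  have hball : ball (0 : ℂ) 1 ∈ 𝓝 0 := ball_mem_nhds 0 one_pos
  have hφ : VanishesToOrder φ p := vanishesToOrder_of_forall_mem_ball one_pos hlam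
    (hψhol.continuousOn.continuousAt hball) hψ0 hform
  have hφt : VanishesToOrder φt q := vanishesToOrder_of_forall_mem_ball one_pos hmu
    (hψthol.continuousOn.continuousAt hball) hψt0 hformt
  set e₁ : HardyDisc := lp.single 2 1 1
  have hpow (d : ℕ) : VanishesToOrder (discEval ((Cφ ^ d) e₁)) (p ^ d) := by
    simpa using (vanishesToOrder_discEval_single 1).discEval_pow_apply hCφ hφ (by omega) d
  have hT : VanishesToOrder (discEval (Cφt e₁)) q := by
    simpa using (vanishesToOrder_discEval_single 1).discEval_apply hCφt hφt (by omega)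
  obtain ⟨J, c, hcq, hrel⟩ := exists_forall_eq_sum_of_triangular
    (u := fun d m => (Cφ ^ d) e₁ m) (pow_right_strictMono₀ hp)
    (fun d => (hpow d).apply_discEval.1) (fun d => (hpow d).apply_discEval.2) q
  have hq_ne_pow : ∀ i, p ^ i ≠ q := by
    rintro (_ | i) h
    · rw [pow_zero] at h
      omega
    · exact hpq (h ▸ dvd_pow_self p i.succ_ne_zero)
  have hTpow (i : Fin J) : Cφt e₁ (p ^ (i : ℕ)) = 0 :=
    hT.apply_discEval.1 _ ((hcq i).lt_of_ne (hq_ne_pow i))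
  refine ofCLM_notMem_closure_image_aeval e₁
    (lp.evalCLM ℂ _ 2 q - ∑ i, c i • lp.evalCLM ℂ _ 2 (p ^ (i : ℕ))) (fun d => ?_) ?_
  · simpa using sub_eq_zero.2 (hrel d)
  · simpa [hTpow] using hT.apply_discEval.2

/-- If `φ(z) = λ z^p ψ(z)` and `φ̃(z) = μ z^q ψ̃(z)` with `p, q ≥ 2`,
`q` not a multiple of `p`, `λ, μ ≠ 0`, `ψ(0), ψ̃(0) ≠ 0`, then the composition operator
`C_{φ̃}` on `H²(𝔻)` is not in the WOT-closure of the polynomial algebra generated by `C_φ`. -/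
theorem composition_not_in_wot_closure_disc
    (φ φt ψ ψt : ℂ → ℂ) (p q : ℕ) (hp : 2 ≤ p) (hq : 2 ≤ q) (hpq : ¬ p ∣ q)
    (lam mu : ℂ) (hlam : lam ≠ 0) (hmu : mu ≠ 0)
    (hφself : ∀ z ∈ ball (0 : ℂ) 1, φ z ∈ ball (0 : ℂ) 1)
    (hφtself : ∀ z ∈ ball (0 : ℂ) 1, φt z ∈ ball (0 : ℂ) 1)
    (hψhol : DifferentiableOn ℂ ψ (ball (0 : ℂ) 1))
    (hψthol : DifferentiableOn ℂ ψt (ball (0 : ℂ) 1))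
    (hform : ∀ z ∈ ball (0 : ℂ) 1, φ z = lam * z ^ p * ψ z)
    (hformt : ∀ z ∈ ball (0 : ℂ) 1, φt z = mu * z ^ q * ψt z)
    (hψ0 : ψ 0 ≠ 0) (hψt0 : ψt 0 ≠ 0)
    (Cφ Cφt : HardyDisc →L[ℂ] HardyDisc)
    (hCφ : ∀ x : HardyDisc, ∀ z ∈ ball (0 : ℂ) 1, discEval (Cφ x) z = discEval x (φ z))
    (hCφt : ∀ x : HardyDisc, ∀ z ∈ ball (0 : ℂ) 1, discEval (Cφt x) z = discEval x (φt z)) :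
    ContinuousLinearMapWOT.ofCLM (σ := RingHom.id ℂ) (E := HardyDisc) (F := HardyDisc) Cφt ∉
      closure ((ContinuousLinearMapWOT.ofCLM (σ := RingHom.id ℂ) (E := HardyDisc) (F := HardyDisc)) ''
        {A : HardyDisc →L[ℂ] HardyDisc | ∃ P : Polynomial ℂ, A = aeval Cφ P}) :=
  composition_not_in_wot_closure_disc_general φ φt ψ ψt p q hp hq hpq lam mu hlam hmu hψhol hψthol
    hform hformt hψ0 hψt0 Cφ Cφt hCφ hCφt
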